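/- arXiv:1011.0472 — 4 statements merged into one kernel-verified Lean document; each statement's English description precedes it below -/
import Mathlib

section
/- Suppose f : E → ℝ ∪ {+∞} is proper, lower semicontinuous, and convex, x₀ ∈ E, and x* is a minimizer over E of the function x ↦ f(x) + Δ(x, x₀). Then for all x with f(x) finite, f(x) + Δ(x, x₀) ≥ f(x*) + Δ(x*, x₀) + Δ(x, x*). -/
/-! Along the segment `xₜ = x* + t (x - x*)`, convexity of `f` and minimality of `x*` give
`t (f x* - f x) ≤ Δ(xₜ, x₀) - Δ(x*, x₀)` for `t ∈ (0, 1]`. Dividing by `t` and letting `t → 0⁺`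
yields `f x* - f x ≤ (Dd(x*) - Dd(x₀))(x - x*)`, and by the three-point identity for `Δ` the
right-hand side is `Δ(x, x₀) - Δ(x*, x₀) - Δ(x, x*)`. -/

noncomputable section

open scoped BigOperators

/-- Bregman divergence induced by `d`. -/
def breg {E : Type*} [NormedAddCommGroup E] [NormedSpace ℝ E]
    (d : E → ℝ) (x y : E) : ℝ :=
  d x - d y - fderiv ℝ d y (x - y)

/-- `d` is `σ`-strongly convex with respect to the norm `‖·‖`. -/
def StrongConvexOnNorm {E : Type*} [NormedAddCommGroup E] [NormedSpace ℝ E]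
    (σ : ℝ) (d : E → ℝ) : Prop :=
  ∀ x y : E, d x ≥ d y + fderiv ℝ d y (x - y) + σ / 2 * ‖x - y‖ ^ 2

/-- `g` is a subgradient of the extended-real-valued function `h` at `y`. -/
def IsSubgradE {E : Type*} [NormedAddCommGroup E] [NormedSpace ℝ E]
    (h : E → EReal) (y : E) (g : E →L[ℝ] ℝ) : Prop :=
  ∀ x, h x ≥ h y + ((g (x - y) : ℝ) : EReal)

/-- `h` is `lam`-strongly convex with respect to `d` (extended-real-valued version). -/
def ScWrtE {E : Type*} [NormedAddCommGroup E] [NormedSpace ℝ E]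
    (d : E → ℝ) (lam : ℝ) (h : E → EReal) : Prop :=
  ∀ y : E, h y ≠ ⊤ → ∀ g : E →L[ℝ] ℝ, IsSubgradE h y g →
    ∀ x, h x ≥ h y + ((g (x - y) + lam * breg d x y : ℝ) : EReal)

/-- `f` is `lam`-strongly convex with respect to `d` (real-valued version). -/
def ScWrtR {E : Type*} [NormedAddCommGroup E] [NormedSpace ℝ E]
    (d : E → ℝ) (lam : ℝ) (f : E → ℝ) : Prop :=
  ∀ y : E, ∀ g : E →L[ℝ] ℝ, (∀ x, f x ≥ f y + g (x - y)) →
    ∀ x, f x ≥ f y + g (x - y) + lam * breg d x y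

/-- Convexity for extended-real-valued functions. -/
def ConvexE {E : Type*} [NormedAddCommGroup E] [NormedSpace ℝ E]
    (h : E → EReal) : Prop :=
  ∀ x y : E, ∀ a b : ℝ, 0 ≤ a → 0 ≤ b → a + b = 1 →
    h (a • x + b • y) ≤ ((a : ℝ) : EReal) * h x + ((b : ℝ) : EReal) * h y

/-- The lower model `ℓ_f(x; y, lam1)`. -/
def ellf {E : Type*} [NormedAddCommGroup E] [NormedSpace ℝ E]
    (d : E → ℝ) (f : E → ℝ) (lam1 : ℝ) (x y : E) : ℝ :=
  f y + fderiv ℝ f y (x - y) + lam1 * breg d x y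

open Filter Set

theorem HasDerivWithinAt.le_of_forall_mul_le_sub {φ : ℝ → ℝ} {φ' c : ℝ}
    (hφ : HasDerivWithinAt φ φ' (Ioi 0) 0) (h : ∀ t ∈ Ioc (0 : ℝ) 1, t * c ≤ φ t - φ 0) :
    c ≤ φ' := by
  have hslope := (hasDerivWithinAt_iff_tendsto_slope' self_notMem_Ioi).mp hφ
  refine ge_of_tendsto hslope ?_
  filter_upwards [Ioc_mem_nhdsGT (zero_lt_one' ℝ)] with t ht
  rw [slope_def_field, sub_zero, le_div_iff₀ ht.1, mul_comm]
  exact h t ht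

section

variable {E : Type*} [NormedAddCommGroup E] [NormedSpace ℝ E]

theorem breg_sub_breg_sub_breg (d : E → ℝ) (x y z : E) :
    breg d x z - breg d y z - breg d x y = (fderiv ℝ d y - fderiv ℝ d z) (x - y) := by
  have hsplit : x - z = (x - y) + (y - z) := by abel
  simp only [breg, sub_apply, hsplit, map_add]
  ring

theorem hasFDerivAt_breg {d : E → ℝ} {y : E} (hd : DifferentiableAt ℝ d y) (z : E) :
    HasFDerivAt (fun x => breg d x z) (fderiv ℝ d y - fderiv ℝ d z) y := by
  have hlin : HasFDerivAt (fun x => fderiv ℝ d z (x - z)) (fderiv ℝ d z) y :=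
    ((fderiv ℝ d z).hasFDerivAt).comp y ((hasFDerivAt_id y).sub_const z)
  exact (hd.hasFDerivAt.sub_const (d z)).sub hlin

theorem hasDerivAt_breg_add_smul {d : E → ℝ} {y : E} (hd : DifferentiableAt ℝ d y) (v z : E) :
    HasDerivAt (fun t : ℝ => breg d (y + t • v) z) ((fderiv ℝ d y - fderiv ℝ d z) v) 0 := by
  have hline : HasDerivAt (fun t : ℝ => y + t • v) v 0 :=
    ((hasDerivAt_id (0 : ℝ)).smul_const v).const_add y |>.congr_deriv (one_smul ℝ v)
  have hd' : HasFDerivAt (fun x => breg d x z) (fderiv ℝ d y - fderiv ℝ d z) (y + (0 : ℝ) • v) := by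
    simpa using hasFDerivAt_breg hd z
  exact hd'.comp_hasDerivAt 0 hline

theorem ConvexE.apply_add_smul_sub_le {f : E → EReal} (hf : ConvexE f) {x y : E} {a b : ℝ}
    (hy : f y = a) (hx : f x = b) {t : ℝ} (ht₀ : 0 ≤ t) (ht₁ : t ≤ 1) :
    f (y + t • (x - y)) ≤ (((1 - t) * a + t * b : ℝ) : EReal) := by
  have hseg : y + t • (x - y) = (1 - t) • y + t • x := by
    rw [smul_sub, sub_smul, one_smul]; abel
  rw [hseg]
  calc f ((1 - t) • y + t • x) ≤ ((1 - t : ℝ) : EReal) * f y + (t : EReal) * f x :=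
        hf y x (1 - t) t (by linarith) ht₀ (by ring)
    _ = (((1 - t) * a + t * b : ℝ) : EReal) := by rw [hy, hx]; norm_cast

theorem ConvexE.mul_sub_le_breg_sub {f : E → EReal} (hf : ConvexE f) {d : E → ℝ} {x y z : E}
    {a b t : ℝ}
    (hmin : f y + (breg d y z : EReal) ≤ f (y + t • (x - y)) + (breg d (y + t • (x - y)) z : EReal))
    (hy : f y = a) (hx : f x = b) (ht₀ : 0 ≤ t) (ht₁ : t ≤ 1) :
    t * (a - b) ≤ breg d (y + t • (x - y)) z - breg d y z := by
  have hreal : ((a + breg d y z : ℝ) : EReal) ≤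
      (((1 - t) * a + t * b + breg d (y + t • (x - y)) z : ℝ) : EReal) :=
    calc ((a + breg d y z : ℝ) : EReal) = f y + (breg d y z : EReal) := by rw [EReal.coe_add, hy]
      _ ≤ f (y + t • (x - y)) + (breg d (y + t • (x - y)) z : EReal) := hmin
      _ ≤ (((1 - t) * a + t * b : ℝ) : EReal) + (breg d (y + t • (x - y)) z : EReal) := by
          gcongr
          exact hf.apply_add_smul_sub_le hy hx ht₀ ht₁
      _ = _ := (EReal.coe_add _ _).symm
  linarith [EReal.coe_le_coe_iff.mp hreal]

end

theorem stmt3_general {E : Type*} [NormedAddCommGroup E] [NormedSpace ℝ E]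
    (d : E → ℝ) (hddiff : Differentiable ℝ d)
    (f : E → EReal) (hne : ∀ x, f x ≠ ⊥)
    (hconv : ConvexE f)
    (x₀ xstar : E)
    (hmin : ∀ x : E, f xstar + ((breg d xstar x₀ : ℝ) : EReal) ≤
      f x + ((breg d x x₀ : ℝ) : EReal)) :
    ∀ x : E, f x ≠ ⊤ →
      f x + ((breg d x x₀ : ℝ) : EReal) ≥
        f xstar + ((breg d xstar x₀ : ℝ) : EReal) + ((breg d x xstar : ℝ) : EReal) := by
  intro x hx
  have hxstar : f xstar ≠ ⊤ := fun htop => by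
    have := hmin x
    rw [htop, EReal.top_add_of_ne_bot (EReal.coe_ne_bot _), top_le_iff] at this
    exact EReal.add_ne_top hx (EReal.coe_ne_top _) this
  obtain ⟨a, ha⟩ : ∃ a : ℝ, f xstar = a := ⟨_, (EReal.coe_toReal hxstar (hne xstar)).symm⟩
  obtain ⟨b, hb⟩ : ∃ b : ℝ, f x = b := ⟨_, (EReal.coe_toReal hx (hne x)).symm⟩
  have hdecrease : ∀ t ∈ Ioc (0 : ℝ) 1,
      t * (a - b) ≤ breg d (xstar + t • (x - xstar)) x₀ - breg d xstar x₀ := fun t ht =>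
    hconv.mul_sub_le_breg_sub (hmin _) ha hb ht.1.le ht.2
  have hfirst_order : a - b ≤ (fderiv ℝ d xstar - fderiv ℝ d x₀) (x - xstar) :=
    (hasDerivAt_breg_add_smul (hddiff xstar) (x - xstar) x₀).hasDerivWithinAt
      |>.le_of_forall_mul_le_sub (by simpa using hdecrease)
  have hthree := breg_sub_breg_sub_breg d x xstar x₀
  rw [ha, hb, ge_iff_le, ← EReal.coe_add, ← EReal.coe_add, ← EReal.coe_add, EReal.coe_le_coe_iff]
  linarith

/-- if `x*` minimizes `x ↦ f x + Δ(x, x₀)` over `E`, then for all `x` with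
`f x` finite, `f x + Δ(x, x₀) ≥ f x* + Δ(x*, x₀) + Δ(x, x*)`. -/
theorem stmt3 {E : Type*} [NormedAddCommGroup E] [NormedSpace ℝ E] [FiniteDimensional ℝ E]
    (σ : ℝ) (hσ : 0 < σ)
    (d : E → ℝ) (hddiff : Differentiable ℝ d) (hdconv : ConvexOn ℝ Set.univ d)
    (hdsc : StrongConvexOnNorm σ d)
    (f : E → EReal) (hne : ∀ x, f x ≠ ⊥) (hprop : ∃ x, f x ≠ ⊤)
    (hlsc : LowerSemicontinuous f) (hconv : ConvexE f)
    (x₀ xstar : E)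
    (hmin : ∀ x : E, f xstar + ((breg d xstar x₀ : ℝ) : EReal) ≤
      f x + ((breg d x x₀ : ℝ) : EReal)) :
    ∀ x : E, f x ≠ ⊤ →
      f x + ((breg d x x₀ : ℝ) : EReal) ≥
        f xstar + ((breg d xstar x₀ : ℝ) : EReal) + ((breg d x xstar : ℝ) : EReal) :=
  stmt3_general d hddiff f hne hconv x₀ xstar hmin
end
end

section
/- Fix k ≥ 1, points x₀, x_k ∈ dom Ψ, points u_1,…,u_k ∈ dom Ψ, and scalars a_1,…,a_k ≥ 0 with A_k := Σ_{i=1}^k a_i > 0. Define ψ_k(x) := Δ(x, x₀) + Σ_{i=1}^k a_i [Ψ(x) + ℓ_f(x; u_i, λ1)]. If A_k J(x_k) ≤ inf_{x ∈ E} ψ_k(x), then for every x ∈ dom Ψ, J(x_k) − J(x) ≤ Δ(x, x₀) / A_k. -/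
noncomputable section

open scoped BigOperators

/- Evaluating `ψ_k` at `w` and bounding each lower model `ℓ_f(w; u_i, λ₁)` by `f w` (the gradient
of a differentiable convex function is a subgradient) gives `A_k J(x_k) ≤ Δ(w, x₀) + A_k J(w)`. -/

theorem ConvexOn.add_fderiv_sub_le {E : Type*} [NormedAddCommGroup E] [NormedSpace ℝ E]
    {f : E → ℝ} (hf : ConvexOn ℝ Set.univ f) {y : E} (hfy : DifferentiableAt ℝ f y) (x : E) :
    f y + fderiv ℝ f y (x - y) ≤ f x := by
  have hline : ConvexOn ℝ Set.univ (f ∘ AffineMap.lineMap (k := ℝ) y x) :=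
    hf.comp_affineMap (AffineMap.lineMap (k := ℝ) y x)
  have hderiv : HasDerivAt (f ∘ AffineMap.lineMap (k := ℝ) y x) (fderiv ℝ f y (x - y)) 0 := by
    have hfy' : HasFDerivAt f (fderiv ℝ f y) (AffineMap.lineMap (k := ℝ) y x 0) := by
      rw [AffineMap.lineMap_apply_zero]
      exact hfy.hasFDerivAt
    exact hfy'.comp_hasDerivAt 0 AffineMap.hasDerivAt_lineMap
  have hslope := hline.le_slope_of_hasDerivAt (Set.mem_univ 0) (Set.mem_univ 1) zero_lt_one hderiv
  simp only [slope_def_field, Function.comp_apply, AffineMap.lineMap_apply_zero,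
    AffineMap.lineMap_apply_one, sub_zero, div_one] at hslope
  linarith

theorem ellf_le_of_scWrtR {E : Type*} [NormedAddCommGroup E] [NormedSpace ℝ E]
    {d f : E → ℝ} {lam1 : ℝ} (hfsc : ScWrtR d lam1 f) (hf : ConvexOn ℝ Set.univ f) {y : E}
    (hfy : DifferentiableAt ℝ f y) (x : E) : ellf d f lam1 x y ≤ f x :=
  hfsc y _ (fun z => hf.add_fderiv_sub_le hfy z) x

@[simp, norm_cast]
theorem EReal.coe_finset_sum {ι : Type*} (s : Finset ι) (g : ι → ℝ) :
    ((∑ i ∈ s, g i : ℝ) : EReal) = ∑ i ∈ s, (g i : EReal) :=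
  map_sum (⟨⟨Real.toEReal, EReal.coe_zero⟩, EReal.coe_add⟩ : ℝ →+ EReal) g s

theorem stmt5_general {E : Type*} [NormedAddCommGroup E] [NormedSpace ℝ E]
    (lam1 : ℝ) (d : E → ℝ) (Ψ : E → EReal) (hΨbot : ∀ x, Ψ x ≠ ⊥)
    (f : E → ℝ) (hfconv : ConvexOn ℝ Set.univ f) (hfdiff : Differentiable ℝ f)
    (hfsc : ScWrtR d lam1 f)
    (k : ℕ) (x₀ xk : E) (hxk : Ψ xk ≠ ⊤) (u : ℕ → E)
    (a : ℕ → ℝ) (ha : ∀ i ∈ Finset.Icc 1 k, 0 ≤ a i)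
    (hA : 0 < ∑ i ∈ Finset.Icc 1 k, a i)
    (hrecur : ((∑ i ∈ Finset.Icc 1 k, a i : ℝ) : EReal) * ((f xk : ℝ) + Ψ xk) ≤
      ⨅ w : E, (((breg d w x₀ : ℝ) : EReal) +
        ∑ i ∈ Finset.Icc 1 k, ((a i : ℝ) : EReal) *
          (Ψ w + ((ellf d f lam1 w (u i) : ℝ) : EReal)))) :
    ∀ w : E, Ψ w ≠ ⊤ →
      ((f xk : ℝ) + Ψ xk) - ((f w : ℝ) + Ψ w) ≤
        ((breg d w x₀ / (∑ i ∈ Finset.Icc 1 k, a i) : ℝ) : EReal) := by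
  intro w hw
  set A := ∑ i ∈ Finset.Icc 1 k, a i
  have hrecur_w := hrecur.trans (iInf_le _ w)
  lift Ψ w to ℝ using ⟨hw, hΨbot w⟩ with p
  lift Ψ xk to ℝ using ⟨hxk, hΨbot xk⟩ with q
  have hψ : A * (f xk + q) ≤
      breg d w x₀ + ∑ i ∈ Finset.Icc 1 k, a i * (p + ellf d f lam1 w (u i)) := by
    exact_mod_cast hrecur_w
  have hmodel : ∑ i ∈ Finset.Icc 1 k, a i * (p + ellf d f lam1 w (u i)) ≤ A * (p + f w) := by
    rw [Finset.sum_mul]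
    gcongr with i hi
    · exact ha i hi
    · exact ellf_le_of_scWrtR hfsc hfconv (hfdiff (u i)) w
  have hgap : f xk + q - (f w + p) ≤ breg d w x₀ / A := by
    rw [le_div_iff₀ hA]
    linarith
  exact_mod_cast hgap

/-- if `A_k J(x_k) ≤ inf ψ_k`, then `J(x_k) - J(x) ≤ Δ(x, x₀)/A_k` on `dom Ψ`. -/
theorem stmt5 {E : Type*} [NormedAddCommGroup E] [NormedSpace ℝ E] [FiniteDimensional ℝ E]
    (σ lam1 lam2 L : ℝ) (hσ : 0 < σ) (hlam1 : 0 ≤ lam1) (hlam2 : 0 ≤ lam2)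
    (hL : σ * lam1 < L)
    (d : E → ℝ) (hddiff : Differentiable ℝ d) (hdconv : ConvexOn ℝ Set.univ d)
    (hdsc : StrongConvexOnNorm σ d)
    (Ψ : E → EReal) (hΨbot : ∀ x, Ψ x ≠ ⊥) (hΨprop : ∃ x, Ψ x ≠ ⊤)
    (hΨlsc : LowerSemicontinuous Ψ) (hΨconv : ConvexE Ψ) (hΨsc : ScWrtE d lam2 Ψ)
    (f : E → ℝ) (hfconv : ConvexOn ℝ Set.univ f) (hfdiff : Differentiable ℝ f)
    (hfsc : ScWrtR d lam1 f)
    (hfL : ∀ x y : E, ‖fderiv ℝ f x - fderiv ℝ f y‖ ≤ L * ‖x - y‖)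
    (k : ℕ) (hk : 1 ≤ k)
    (x₀ xk : E) (hx₀ : Ψ x₀ ≠ ⊤) (hxk : Ψ xk ≠ ⊤)
    (u : ℕ → E) (hu : ∀ i ∈ Finset.Icc 1 k, Ψ (u i) ≠ ⊤)
    (a : ℕ → ℝ) (ha : ∀ i ∈ Finset.Icc 1 k, 0 ≤ a i)
    (hA : 0 < ∑ i ∈ Finset.Icc 1 k, a i)
    (hrecur : ((∑ i ∈ Finset.Icc 1 k, a i : ℝ) : EReal) * ((f xk : ℝ) + Ψ xk) ≤
      ⨅ w : E, (((breg d w x₀ : ℝ) : EReal) +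
        ∑ i ∈ Finset.Icc 1 k, ((a i : ℝ) : EReal) *
          (Ψ w + ((ellf d f lam1 w (u i) : ℝ) : EReal)))) :
    ∀ w : E, Ψ w ≠ ⊤ →
      ((f xk : ℝ) + Ψ xk) - ((f w : ℝ) + Ψ w) ≤
        ((breg d w x₀ / (∑ i ∈ Finset.Icc 1 k, a i) : ℝ) : EReal) :=
  stmt5_general lam1 d Ψ hΨbot f hfconv hfdiff hfsc k x₀ xk hxk u a ha hA hrecur
end
end

section
/- Let A₀ = 0 and, for each k ≥ 0, let a_{k+1} > 0 satisfy (a_{k+1} + A_k)(λ1 a_{k+1} + λ A_k + 1) + a_{k+1} λ2 A_k = (L/σ) a_{k+1}², and set A_{k+1} = A_k + a_{k+1}, where λ1, λ2 ≥ 0, λ = λ1 + λ2, σ > 0 and L > σλ1. Then for every k ≥ 1, A_k ≥ max{ σ(k+1)²/(4L), (σ/(L − σλ1)) (1 + √(σλ/(4L)))^{2k−2} }. -/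
set_option maxHeartbeats 1000000

/-- lower bound on the growth of `A_k` in AGM-EF-∞. -/
theorem stmt7 (σ lam1 lam2 L : ℝ) (hσ : 0 < σ) (hlam1 : 0 ≤ lam1) (hlam2 : 0 ≤ lam2)
    (hL : σ * lam1 < L)
    (a A : ℕ → ℝ) (hA0 : A 0 = 0)
    (hapos : ∀ k : ℕ, 0 < a (k + 1))
    (haroot : ∀ k : ℕ, (a (k + 1) + A k) * (lam1 * a (k + 1) + (lam1 + lam2) * A k + 1)
        + a (k + 1) * lam2 * A k = L / σ * a (k + 1) ^ 2)
    (hA : ∀ k : ℕ, A (k + 1) = A k + a (k + 1)) :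
    ∀ k : ℕ, 1 ≤ k →
      A k ≥ max (σ * ((k : ℝ) + 1) ^ 2 / (4 * L))
        (σ / (L - σ * lam1) *
          (1 + Real.sqrt (σ * (lam1 + lam2) / (4 * L))) ^ (2 * k - 2)) := by
  have hL0 : 0 < L := lt_of_le_of_lt (by positivity) hL
  set κ := L / σ with hκdef
  have hκ1 : lam1 < κ := by
    rw [hκdef, lt_div_iff₀ hσ]; linarith
  have hκ0 : 0 < κ := lt_of_le_of_lt hlam1 hκ1
  have key : ∀ k : ℕ, (κ - lam1) * a (k+1)^2 =
      2*(lam1+lam2)*A k*a (k+1) + a (k+1) + (lam1+lam2)*(A k)^2 + A k := by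
    intro k
    linear_combination (-1 : ℝ) * haroot k
  have hApos : ∀ k : ℕ, 0 ≤ A k := by
    intro k
    induction k with
    | zero => rw [hA0]
    | succ n ih => rw [hA n]; have := hapos n; linarith
  have hA1 : A 1 = 1 / (κ - lam1) := by
    have h := key 0
    rw [hA0] at h
    have ha := hapos 0
    have h2 : a (0+1) * (κ - lam1) = 1 := by nlinarith [h, ha]
    rw [hA 0, hA0, zero_add, eq_div_iff (ne_of_gt (by linarith : (0:ℝ) < κ - lam1))]
    exact h2
  -- Bound 1
  have bound1 : ∀ k : ℕ, 1 ≤ k → ((k:ℝ)+1)^2 ≤ 4*κ*A k := by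
    intro k hk
    induction k, hk using Nat.le_induction with
    | base =>
      rw [hA1]
      push_cast
      rw [mul_one_div, le_div_iff₀ (by linarith)]
      nlinarith
    | succ k hk ih =>
      have hk1 : (1:ℝ) ≤ (k:ℝ) := by exact_mod_cast hk
      have ha := hapos k
      have hAk := hApos k
      have h2 : a (k+1) + A k ≤ κ * a (k+1)^2 := by
        nlinarith [key k, mul_nonneg (mul_nonneg (by linarith : (0:ℝ) ≤ lam1+lam2) hAk) ha.le,
          mul_nonneg (by linarith : (0:ℝ) ≤ lam1+lam2) (sq_nonneg (A k)),
          mul_nonneg hlam1 (sq_nonneg (a (k+1)))]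
      rw [hA k]
      by_contra hcon
      push_neg at hcon
      push_cast at hcon
      have hlin : 2*κ*a (k+1) < (k:ℝ)+2 := by nlinarith [ih, hcon]
      have p1 : 0 < a (k+1) * ((k:ℝ)+2 - 2*κ*a (k+1)) :=
        mul_pos ha (by linarith)
      have p2 : 0 ≤ (k:ℝ) * ((k:ℝ)+2 - 2*κ*a (k+1)) :=
        mul_nonneg (by linarith) (by linarith)
      have p3 : 4*κ*(a (k+1) + A k) ≤ 4*κ*(κ * a (k+1)^2) :=
        mul_le_mul_of_nonneg_left h2 (by linarith)
      push_cast
      nlinarith [p1, p2, p3, ih, mul_pos hκ0 p1]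
  -- positivity of A k for k ≥ 1
  have hApos1 : ∀ k : ℕ, 1 ≤ k → 0 < A k := by
    intro k hk
    have h := bound1 k hk
    have hk1 : (1:ℝ) ≤ (k:ℝ) := by exact_mod_cast hk
    nlinarith
  -- Bound 2
  set s := Real.sqrt (σ * (lam1 + lam2) / (4 * L)) with hsdef
  have hs0 : 0 ≤ s := Real.sqrt_nonneg _
  have hs2 : 4*κ*s^2 = lam1 + lam2 := by
    rw [hsdef, Real.sq_sqrt (by positivity)]
    rw [hκdef]
    field_simp
  have geo : ∀ k : ℕ, 1 ≤ k → (1+s)^2 * A k ≤ A (k+1) := by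
    intro k hk
    have hAk : 0 < A k := hApos1 k hk
    have ha := hapos k
    have hca : (2*s + s^2) * A k ≤ a (k+1) := by
      rcases eq_or_lt_of_le (by linarith : (0:ℝ) ≤ lam1 + lam2) with hlz | hlp
      · have hsz : s = 0 := by
          rw [hsdef]
          rw [← hlz]
          simp
        rw [hsz]; simp; positivity
      · have hsp : 0 < s := by
          rw [hsdef]
          apply Real.sqrt_pos.mpr
          positivity
        have hcpos : 0 < 2*s + s^2 := by positivity
        have h3 : 2*(lam1+lam2)*A k*a (k+1) + (lam1+lam2)*(A k)^2 ≤ (κ - lam1) * a (k+1)^2 := by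
          nlinarith [key k, hApos k, ha]
        have e1 : (2*s+s^2)^2 ≤ 8*s^2*(2*s+s^2) + 4*s^2 := by
          nlinarith [pow_nonneg hs0 3, pow_nonneg hs0 4]
        have hgc : (κ - lam1) * ((2*s+s^2) * A k)^2 ≤
            2*(lam1+lam2)*A k*((2*s+s^2) * A k) + (lam1+lam2)*(A k)^2 := by
          have hrhs : 2*(lam1+lam2)*A k*((2*s+s^2)*A k) + (lam1+lam2)*(A k)^2
              = (4*κ*s^2) * (2*(A k)*((2*s+s^2)*A k) + (A k)^2) := by
            rw [← hs2]; ring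
          rw [hrhs]
          nlinarith [mul_le_mul_of_nonneg_left e1 (mul_nonneg hκ0.le (sq_nonneg (A k))),
            mul_nonneg hlam1 (sq_nonneg ((2*s+s^2)*A k))]
        have hq : 2*(lam1+lam2)*A k ≤ (κ - lam1) * a (k+1) := by
          nlinarith [h3, mul_nonneg (by linarith : (0:ℝ) ≤ lam1+lam2) (sq_nonneg (A k)), ha]
        nlinarith [h3, hgc, hq, mul_pos (by linarith : (0:ℝ) < κ - lam1) (mul_pos hcpos hAk)]
    rw [hA k]
    nlinarith [hca]
  have bound2 : ∀ k : ℕ, 1 ≤ k → 1/(κ - lam1) * (1+s)^(2*k-2) ≤ A k := by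
    intro k hk
    induction k, hk using Nat.le_induction with
    | base => rw [hA1]; norm_num
    | succ k hk ih =>
      have hexp : 2*(k+1) - 2 = (2*k - 2) + 2 := by omega
      rw [hexp, pow_add, ← mul_assoc]
      calc 1/(κ - lam1) * (1+s)^(2*k-2) * (1+s)^2
          ≤ A k * (1+s)^2 := mul_le_mul_of_nonneg_right ih (by positivity)
        _ = (1+s)^2 * A k := by ring
        _ ≤ A (k+1) := geo k hk
  -- Assemble
  intro k hk
  rw [ge_iff_le]
  apply max_le
  · have h := bound1 k hk
    rw [div_le_iff₀ (by linarith : (0:ℝ) < 4*L)]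
    have hσκ : σ * κ = L := by rw [hκdef]; field_simp
    nlinarith [mul_le_mul_of_nonneg_left h hσ.le, hσκ, hApos k]
  · have h := bound2 k hk
    have heq : σ / (L - σ*lam1) = 1/(κ - lam1) := by
      have h1 : (0:ℝ) < L - σ*lam1 := by linarith
      have h2 : (0:ℝ) < κ - lam1 := by linarith
      rw [div_eq_div_iff (ne_of_gt h1) (ne_of_gt h2), hκdef]
      field_simp
    rw [heq]
    exact h
end

section
/- Consider the sequences produced by Algorithm AGM-EF-1 (as specified in the context). Set a₀ := 1 and, for 0 ≤ i ≤ k, b_k(i) := a_i ∏_{j=i+1}^{k} (1 − a_j). Then for every k ≥ 1, Σ_{i=0}^{k} b_k(i) = 1, and for every x ∈ dom Ψ, q_k(x) ≤ (L/σ) b_k(0) Δ(x, u₀) + Ψ(x) + Σ_{i=0}^{k} b_k(i) ℓ_f(x; u_i, λ1). -/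
noncomputable section

open scoped BigOperators

/-!
Each `ψ (k + 1)` is a Bregman quadratic (`μ • d` plus a continuous affine function) plus a positive
multiple of `Ψ`. At its minimizer `z (k + 1)` first-order optimality produces a subgradient of `Ψ`,
and the relative strong convexity of `Ψ` then gives
`ψ (k + 1) ≥ ψ (k + 1) (z (k + 1)) + c (k + 1) • Δ(·, z (k + 1)) = q (k + 1)`.
So `q (k + 1) ≤ (1 - a (k + 1)) q k + a (k + 1) (ℓ_f(·; u (k + 1)) + Ψ)`, and unrolling this from
`q 0 ≤ (L / σ) Δ(·, u 0) + ℓ_f(·; u 0) + Ψ` (as `λ₁ Δ ≥ 0`) yields exactly the weights `b_k(i)`.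
-/

open Finset

section Bregman

variable {E : Type*} [NormedAddCommGroup E] [NormedSpace ℝ E] {d : E → ℝ}

lemma breg_nonneg {σ : ℝ} (hσ : 0 ≤ σ) (hd : StrongConvexOnNorm σ d) (x y : E) :
    0 ≤ breg d x y := by
  have := hd x y
  have : 0 ≤ σ / 2 * ‖x - y‖ ^ 2 := by positivity
  unfold breg
  linarith

/-- The Bregman analogue of a quadratic of curvature `μ`: `R - μ • d` is continuous affine, so
`R x = R z + DR(z) (x - z) + μ * breg d x z` for all `x`, `z`. -/
def IsBregmanQuadratic (d : E → ℝ) (μ : ℝ) (R : E → ℝ) : Prop :=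
  ∃ (ℓ : E →L[ℝ] ℝ) (b : ℝ), ∀ x, R x = μ * d x + ℓ x + b

namespace IsBregmanQuadratic

variable {μ ν : ℝ} {R S : E → ℝ}

lemma add (hR : IsBregmanQuadratic d μ R) (hS : IsBregmanQuadratic d ν S) :
    IsBregmanQuadratic d (μ + ν) (fun x => R x + S x) := by
  obtain ⟨ℓ, b, hR⟩ := hR
  obtain ⟨ℓ', b', hS⟩ := hS
  exact ⟨ℓ + ℓ', b + b', fun x => by simp only [hR, hS, add_apply]; ring⟩

lemma const_mul (hR : IsBregmanQuadratic d μ R) (c : ℝ) :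
    IsBregmanQuadratic d (c * μ) (fun x => c * R x) := by
  obtain ⟨ℓ, b, hR⟩ := hR
  exact ⟨c • ℓ, c * b, fun x => by simp only [hR, smul_apply, smul_eq_mul]; ring⟩

lemma exists_hasFDerivAt (hR : IsBregmanQuadratic d μ R) {z : E} (hd : DifferentiableAt ℝ d z) :
    ∃ G : E →L[ℝ] ℝ, HasFDerivAt R G z ∧ ∀ x, R x = R z + G (x - z) + μ * breg d x z := by
  obtain ⟨ℓ, b, hR⟩ := hR
  refine ⟨μ • fderiv ℝ d z + ℓ, ?_, fun x => ?_⟩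
  · rw [show R = fun x => μ * d x + ℓ x + b from funext hR]
    exact ((hd.hasFDerivAt.const_mul μ).add ℓ.hasFDerivAt).add_const b
  · simp only [hR, breg, add_apply, smul_apply, smul_eq_mul, map_sub]
    ring

end IsBregmanQuadratic

lemma isBregmanQuadratic_mul_breg_add (c : ℝ) (y : E) (s : ℝ) :
    IsBregmanQuadratic d c (fun x => c * breg d x y + s) :=
  ⟨-c • fderiv ℝ d y, s - c * d y + c * fderiv ℝ d y y, fun x => by
    simp only [breg, smul_apply, smul_eq_mul, map_sub]; ring⟩

lemma isBregmanQuadratic_ellf (f : E → ℝ) (lam : ℝ) (y : E) :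
    IsBregmanQuadratic d lam (fun x => ellf d f lam x y) :=
  ⟨fderiv ℝ f y - lam • fderiv ℝ d y,
    f y - fderiv ℝ f y y - lam * (d y - fderiv ℝ d y y), fun x => by
    simp only [ellf, breg, sub_apply, smul_apply, smul_eq_mul, map_sub]
    ring⟩

end Bregman

namespace EReal

lemma coe_add_coe_mul_top (r : ℝ) {c : ℝ} (hc : 0 < c) : (r : EReal) + c * ⊤ = ⊤ := by
  rw [mul_top_of_pos (EReal.coe_pos.2 hc), coe_add_top]

lemma coe_mul_add_coe_mul {x : EReal} (hx : x ≠ ⊥) {α β e : ℝ} (hα : 0 ≤ α) (hβ : 0 < β)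
    (he : 0 ≤ e) (r s : ℝ) :
    (α : EReal) * (r + e * x) + β * (s + x) =
      ((α * r + β * s : ℝ) : EReal) + (α * e + β : ℝ) * x := by
  induction x using EReal.rec with
  | bot => exact absurd rfl hx
  | coe x =>
    norm_cast
    ring
  | top =>
    have hnb : (α : EReal) * (r + e * ⊤) ≠ ⊥ := by
      have hy : (r : EReal) + e * ⊤ ≠ ⊥ := ne_bot_of_le_ne_bot (coe_ne_bot r)
        (le_add_of_nonneg_right (mul_nonneg (EReal.coe_nonneg.2 he) le_top))
      exact (mul_ne_bot _ _).2
        ⟨Or.inl (coe_ne_bot _), Or.inr hy, Or.inl (coe_ne_top _), Or.inl (EReal.coe_nonneg.2 hα)⟩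
    rw [coe_add_top, mul_top_of_pos (EReal.coe_pos.2 hβ), add_top_of_ne_bot hnb,
      coe_add_coe_mul_top _ (by positivity)]

lemma coe_one_sub_mul_add_le {y : EReal} {b p ℓ α : ℝ} (hy : y ≤ (b : EReal) + p)
    (hα : α ≤ 1) :
    ((1 - α : ℝ) : EReal) * y + α * (ℓ + p) ≤ (((1 - α) * b + α * ℓ : ℝ) : EReal) + p := by
  calc ((1 - α : ℝ) : EReal) * y + α * (ℓ + p) ≤ ((1 - α : ℝ) : EReal) * (b + p) + α * (ℓ + p) := by
        gcongr
    _ = (((1 - α) * b + α * ℓ : ℝ) : EReal) + p := by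
        norm_cast
        ring

end EReal

section Composite

lemma ne_top_of_forall_le {X : Type*} {Ψ : X → EReal} {R : X → ℝ} {c : ℝ} {z : X}
    (hΨ : ∃ x, Ψ x ≠ ⊤) (hc : 0 < c)
    (hmin : ∀ x, (R z : EReal) + c * Ψ z ≤ R x + c * Ψ x) : Ψ z ≠ ⊤ := by
  intro hz
  obtain ⟨x, hx⟩ := hΨ
  have := hmin x
  rw [hz, EReal.coe_add_coe_mul_top _ hc, top_le_iff] at this
  refine EReal.add_ne_top (EReal.coe_ne_top _) ?_ this
  exact (EReal.mul_ne_top _ _).2 ⟨Or.inl (EReal.coe_ne_bot _), Or.inl (EReal.coe_nonneg.2 hc.le),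
    Or.inl (EReal.coe_ne_top _), Or.inr hx⟩

variable {E : Type*} [NormedAddCommGroup E] [NormedSpace ℝ E] {Ψ : E → EReal} {R : E → ℝ}
  {c : ℝ} {z : E}

theorem ConvexE.isSubgradE_of_forall_le (hconv : ConvexE Ψ) (hbot : ∀ x, Ψ x ≠ ⊥)
    {G : E →L[ℝ] ℝ} (hR : HasFDerivAt R G z) (hc : 0 < c) (hz : Ψ z ≠ ⊤)
    (hmin : ∀ x, (R z : EReal) + c * Ψ z ≤ R x + c * Ψ x) :
    IsSubgradE Ψ z (-c⁻¹ • G) := by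
  intro x
  by_cases hx : Ψ x = ⊤
  · simp [hx]
  obtain ⟨p, hp⟩ : ∃ p : ℝ, Ψ z = p := ⟨_, (EReal.coe_toReal hz (hbot z)).symm⟩
  obtain ⟨r, hr⟩ : ∃ r : ℝ, Ψ x = r := ⟨_, (EReal.coe_toReal hx (hbot x)).symm⟩
  let g : ℝ → ℝ := fun t => R (z + t • (x - z)) + c * t * (r - p)
  have hg : HasDerivAt g (G (x - z) + c * (r - p)) 0 := by
    have hline : HasDerivAt (fun t : ℝ => z + t • (x - z)) (x - z) 0 := by
      simpa using ((hasDerivAt_id (0 : ℝ)).smul_const (x - z)).const_add z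
    have := (zero_smul ℝ (x - z) ▸ add_zero z ▸ hR).comp_hasDerivAt (0 : ℝ) hline
    exact (this.add ((hasDerivAt_id (0 : ℝ)).const_mul c |>.mul_const (r - p))).congr_deriv
      (by simp)
  -- along the segment `[z, x]`, convexity of `Ψ` bounds `Ψ` by its chord, so `g` is minimal at `0`
  have hgmin : IsMinOn g (Set.Icc 0 1) 0 := by
    intro t ht
    have hseg : z + t • (x - z) = t • x + (1 - t) • z := by
      rw [smul_sub, sub_smul, one_smul]; abel
    have hchord := hconv x z t (1 - t) ht.1 (by linarith [ht.2]) (by ring)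
    have hmint := (hmin (t • x + (1 - t) • z)).trans
      (add_le_add_right (mul_le_mul_of_nonneg_left hchord (EReal.coe_nonneg.2 hc.le)) _)
    rw [hp, hr] at hmint
    have : R z + c * p ≤ R (t • x + (1 - t) • z) + c * (t * r + (1 - t) * p) := by
      exact_mod_cast hmint
    show g 0 ≤ g t
    simp only [g, zero_smul, add_zero, mul_zero, zero_mul, hseg]
    linarith
  have hslope : 0 ≤ G (x - z) + c * (r - p) := by
    simpa using hgmin.localize.hasFDerivWithinAt_nonneg hg.hasFDerivAt.hasFDerivWithinAt
      (sub_mem_posTangentConeAt_of_segment_subset (segment_eq_Icc zero_le_one).subset)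
  have hdiv : -c⁻¹ * G (x - z) ≤ r - p := by
    refine le_of_mul_le_mul_left ?_ hc
    linarith [mul_inv_cancel_left₀ hc.ne' (G (x - z))]
  rw [hp, hr, ge_iff_le, smul_apply, smul_eq_mul]
  exact_mod_cast (by linarith : p + -c⁻¹ * G (x - z) ≤ r)

theorem IsBregmanQuadratic.add_mul_breg_le_of_forall_le {d : E → ℝ} {μ lam : ℝ}
    (hR : IsBregmanQuadratic d μ R) (hd : DifferentiableAt ℝ d z) (hconv : ConvexE Ψ)
    (hbot : ∀ x, Ψ x ≠ ⊥) (hsc : ScWrtE d lam Ψ) (hprop : ∃ x, Ψ x ≠ ⊤) (hc : 0 < c)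
    (hmin : ∀ x, (R z : EReal) + c * Ψ z ≤ R x + c * Ψ x) (x : E) :
    (R z : EReal) + c * Ψ z + ((μ + c * lam) * breg d x z : ℝ) ≤ R x + c * Ψ x := by
  have hz := ne_top_of_forall_le hprop hc hmin
  obtain ⟨G, hG, hTaylor⟩ := hR.exists_hasFDerivAt hd
  have hsub := hsc z hz _ (hconv.isSubgradE_of_forall_le hbot hG hc hz hmin) x
  by_cases hx : Ψ x = ⊤
  · rw [hx, EReal.coe_add_coe_mul_top _ hc]
    exact le_top
  obtain ⟨p, hp⟩ : ∃ p : ℝ, Ψ z = p := ⟨_, (EReal.coe_toReal hz (hbot z)).symm⟩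
  obtain ⟨r, hr⟩ : ∃ r : ℝ, Ψ x = r := ⟨_, (EReal.coe_toReal hx (hbot x)).symm⟩
  rw [hp, hr, smul_apply, smul_eq_mul] at hsub
  have hsub' : p + (-c⁻¹ * G (x - z) + lam * breg d x z) ≤ r := by exact_mod_cast hsub
  rw [hp, hr]
  exact_mod_cast (by linarith [hTaylor x, mul_le_mul_of_nonneg_left hsub' hc.le,
    mul_inv_cancel_left₀ hc.ne' (G (x - z))] :
    R z + c * p + (μ + c * lam) * breg d x z ≤ R x + c * r)

end Composite

section MovingAverage

variable {K : Type*} [CommRing K] (a : ℕ → K)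

/-- The weight of `v i` in `s k`, where `s 0 = a 0 * v 0` and
`s (k + 1) = (1 - a (k + 1)) * s k + a (k + 1) * v (k + 1)`. -/
def movingAvgWeight (k i : ℕ) : K :=
  a i * ∏ j ∈ Icc (i + 1) k, (1 - a j)

lemma movingAvgWeight_self (k : ℕ) : movingAvgWeight a k k = a k := by
  simp [movingAvgWeight]

lemma movingAvgWeight_succ {k i : ℕ} (h : i ≤ k) :
    movingAvgWeight a (k + 1) i = (1 - a (k + 1)) * movingAvgWeight a k i := by
  rw [movingAvgWeight, prod_Icc_succ_top (by omega), movingAvgWeight]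
  ring

lemma sum_movingAvgWeight_mul_succ (v : ℕ → K) (k : ℕ) :
    ∑ i ∈ range (k + 2), movingAvgWeight a (k + 1) i * v i =
      (1 - a (k + 1)) * ∑ i ∈ range (k + 1), movingAvgWeight a k i * v i
        + a (k + 1) * v (k + 1) := by
  rw [sum_range_succ, movingAvgWeight_self, mul_sum]
  congr 1
  refine sum_congr rfl fun i hi => ?_
  rw [movingAvgWeight_succ a (Nat.lt_succ_iff.mp (mem_range.mp hi)), mul_assoc]

lemma sum_movingAvgWeight (ha : a 0 = 1) (k : ℕ) :
    ∑ i ∈ range (k + 1), movingAvgWeight a k i = 1 := by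
  induction k with
  | zero => simp [movingAvgWeight_self, ha]
  | succ k ih =>
    simpa [ih] using sum_movingAvgWeight_mul_succ a (fun _ => 1) k

end MovingAverage

section EstimateSequence

variable {E : Type*} [NormedAddCommGroup E] [NormedSpace ℝ E] {d : E → ℝ} {Ψ : E → EReal}
  {lam1 lam2 : ℝ}

/-- `q = R + e • Ψ` with `R` a Bregman quadratic of curvature `m`; when `Ψ` is `lam`-strongly
convex relative to `d`, `c = m + e * lam` is a modulus of relative strong convexity of `q`. -/
def IsCompositeModel (d : E → ℝ) (Ψ : E → EReal) (lam c : ℝ) (q : E → EReal) : Prop :=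
  ∃ (R : E → ℝ) (m e : ℝ), IsBregmanQuadratic d m R ∧ 0 ≤ e ∧ m + e * lam = c ∧
    ∀ w, q w = R w + e * Ψ w

theorem IsCompositeModel.estimate_step {c c' α : ℝ} {q ψ q' : E → EReal} {ℓ : E → ℝ} {z : E}
    (hq : IsCompositeModel d Ψ lam2 c q) (hd : Differentiable ℝ d) (hconv : ConvexE Ψ)
    (hbot : ∀ x, Ψ x ≠ ⊥) (hsc : ScWrtE d lam2 Ψ) (hprop : ∃ x, Ψ x ≠ ⊤)
    (hℓ : IsBregmanQuadratic d lam1 ℓ) (hα : α ∈ Set.Ioo 0 1)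
    (hψ : ∀ w, ψ w = ((1 - α : ℝ) : EReal) * q w + α * (ℓ w + Ψ w)) (hz : ∀ w, ψ z ≤ ψ w)
    (hc' : c' = (1 - α) * c + (lam1 + lam2) * α)
    (hq' : ∀ w, q' w = ((c' * breg d w z : ℝ) : EReal) + ψ z) :
    IsCompositeModel d Ψ lam2 c' q' ∧ ∀ w, q' w ≤ ψ w := by
  obtain ⟨R, m, e, hR, he, rfl, hqR⟩ := hq
  set R' : E → ℝ := fun w => (1 - α) * R w + α * ℓ w
  have hR' : IsBregmanQuadratic d _ R' := (hR.const_mul (1 - α)).add (hℓ.const_mul α)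
  have hc : 0 < (1 - α) * e + α := by nlinarith [hα.1, hα.2]
  have hψ' : ∀ w, ψ w = (R' w : EReal) + ((1 - α) * e + α : ℝ) * Ψ w :=
    fun w => by rw [hψ, hqR, EReal.coe_mul_add_coe_mul (hbot w) (by linarith [hα.2]) hα.1 he]
  simp only [hψ'] at hz hq' ⊢
  obtain ⟨p, hp⟩ : ∃ p : ℝ, Ψ z = p :=
    ⟨_, (EReal.coe_toReal (ne_top_of_forall_le hprop hc hz) (hbot z)).symm⟩
  rw [hp] at hq'
  refine ⟨⟨_, c', 0, isBregmanQuadratic_mul_breg_add c' z (R' z + ((1 - α) * e + α) * p), le_rfl,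
    by ring, fun w => by rw [hq', EReal.coe_zero, zero_mul, add_zero]; norm_cast⟩, fun w => ?_⟩
  have := hR'.add_mul_breg_le_of_forall_le (hd z) hconv hbot hsc hprop hc hz w
  rw [hp] at this
  refine le_trans (le_of_eq ?_) this
  rw [hq', hc']
  norm_cast
  ring

theorem IsCompositeModel.le_movingAvg {a c : ℕ → ℝ} {ψ q : ℕ → E → EReal} {z : ℕ → E}
    {ℓ : ℕ → E → ℝ} {g : E → ℝ} (hd : Differentiable ℝ d) (hconv : ConvexE Ψ)
    (hbot : ∀ x, Ψ x ≠ ⊥) (hsc : ScWrtE d lam2 Ψ) (hprop : ∃ x, Ψ x ≠ ⊤)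
    (hℓ : ∀ i, IsBregmanQuadratic d lam1 (ℓ i)) (hq0 : IsCompositeModel d Ψ lam2 (c 0) (q 0))
    (hq0g : ∀ w, Ψ w ≠ ⊤ → q 0 w ≤ ((g w + ℓ 0 w : ℝ) : EReal) + Ψ w) (ha0 : a 0 = 1)
    (ha : ∀ k, a (k + 1) ∈ Set.Ioo 0 1)
    (hc : ∀ k, c (k + 1) = (1 - a (k + 1)) * c k + (lam1 + lam2) * a (k + 1))
    (hψ : ∀ k w, ψ (k + 1) w = ((1 - a (k + 1) : ℝ) : EReal) * q k w
      + a (k + 1) * (ℓ (k + 1) w + Ψ w))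
    (hz : ∀ k w, ψ (k + 1) (z (k + 1)) ≤ ψ (k + 1) w)
    (hq : ∀ k w, q (k + 1) w =
      ((c (k + 1) * breg d w (z (k + 1)) : ℝ) : EReal) + ψ (k + 1) (z (k + 1)))
    (k : ℕ) :
    IsCompositeModel d Ψ lam2 (c k) (q k) ∧ ∀ w, Ψ w ≠ ⊤ → q k w ≤
      ((movingAvgWeight a k 0 * g w + ∑ i ∈ range (k + 1), movingAvgWeight a k i * ℓ i w : ℝ) :
        EReal) + Ψ w := by
  induction k with
  | zero => simpa [movingAvgWeight_self, ha0] using ⟨hq0, hq0g⟩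
  | succ k ih =>
    obtain ⟨hmodel, hle⟩ := ih.1.estimate_step hd hconv hbot hsc hprop (hℓ (k + 1)) (ha k)
      (hψ k) (hz k) (hc k) (hq k)
    refine ⟨hmodel, fun w hw => (hle w).trans ?_⟩
    obtain ⟨p, hp⟩ : ∃ p : ℝ, Ψ w = p := ⟨_, (EReal.coe_toReal hw (hbot w)).symm⟩
    rw [hψ, hp, movingAvgWeight_succ a (Nat.zero_le k), sum_movingAvgWeight_mul_succ]
    convert EReal.coe_one_sub_mul_add_le (ℓ := ℓ (k + 1) w) (hp ▸ ih.2 w hw) (ha k).2.le using 2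
    congr 1
    ring

end EstimateSequence

theorem stmt17_general {E : Type*} [NormedAddCommGroup E] [NormedSpace ℝ E]
    (σ lam1 lam2 L : ℝ) (hσ : 0 < σ) (hlam1 : 0 ≤ lam1)
    (d : E → ℝ) (hddiff : Differentiable ℝ d)
    (hdsc : StrongConvexOnNorm σ d)
    (Ψ : E → EReal) (hΨbot : ∀ x, Ψ x ≠ ⊥) (hΨprop : ∃ x, Ψ x ≠ ⊤)
    (hΨconv : ConvexE Ψ) (hΨsc : ScWrtE d lam2 Ψ)
    (f : E → ℝ)
    -- Algorithm AGM-EF-1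
    (x z u : ℕ → E) (a c : ℕ → ℝ) (ψ q : ℕ → E → EReal)
    (hc0 : c 0 = L / σ + lam2)
    (hq0 : ∀ w, q 0 w =
      ((L / σ * breg d w (u 0) + f (u 0) + fderiv ℝ f (u 0) (w - u 0) : ℝ) : EReal) + Ψ w)
    (hamem : ∀ k, a (k + 1) ∈ Set.Ioo (0 : ℝ) 1)
    (hc : ∀ k, c (k + 1) = (1 - a (k + 1)) * c k + (lam1 + lam2) * a (k + 1))
    (hψ : ∀ k w, ψ (k + 1) w =
      ((1 - a (k + 1) : ℝ) : EReal) * q k w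
        + ((a (k + 1) : ℝ) : EReal) * (((ellf d f lam1 w (u (k + 1)) : ℝ) : EReal) + Ψ w))
    (hz : ∀ k w, ψ (k + 1) (z (k + 1)) ≤ ψ (k + 1) w)
    (hq : ∀ k w, q (k + 1) w =
      ((c (k + 1) * breg d w (z (k + 1)) : ℝ) : EReal) + ψ (k + 1) (z (k + 1)))
    (ha0 : a 0 = 1) :
    ∀ k : ℕ, 1 ≤ k →
      (∑ i ∈ Finset.range (k + 1), a i * ∏ j ∈ Finset.Icc (i + 1) k, (1 - a j)) = 1 ∧
      ∀ w : E, Ψ w ≠ ⊤ →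
        q k w ≤
          ((L / σ * (a 0 * ∏ j ∈ Finset.Icc 1 k, (1 - a j)) * breg d w (u 0) : ℝ) : EReal)
            + Ψ w
            + ((∑ i ∈ Finset.range (k + 1),
                (a i * ∏ j ∈ Finset.Icc (i + 1) k, (1 - a j)) * ellf d f lam1 w (u i) : ℝ) :
              EReal) := by
  have hR0 : IsBregmanQuadratic d (L / σ)
      (fun w => L / σ * breg d w (u 0) + f (u 0) + fderiv ℝ f (u 0) (w - u 0)) := by
    convert isBregmanQuadratic_ellf (d := d) f (L / σ) (u 0) using 1
    funext w
    unfold ellf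
    ring
  have hmodel0 : IsCompositeModel d Ψ lam2 (c 0) (q 0) :=
    ⟨_, _, 1, hR0, zero_le_one, by rw [hc0, one_mul], fun w => by rw [hq0, EReal.coe_one, one_mul]⟩
  have hq0le : ∀ w, Ψ w ≠ ⊤ → q 0 w ≤
      ((L / σ * breg d w (u 0) + ellf d f lam1 w (u 0) : ℝ) : EReal) + Ψ w := by
    intro w _
    rw [hq0]
    refine add_le_add_left (EReal.coe_le_coe_iff.2 ?_) _
    unfold ellf
    linarith [mul_nonneg hlam1 (breg_nonneg hσ.le hdsc w (u 0))]
  intro k _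
  refine ⟨sum_movingAvgWeight a ha0 k, fun w hw => ?_⟩
  convert (hmodel0.le_movingAvg hddiff hΨconv hΨbot hΨsc hΨprop
    (fun i => isBregmanQuadratic_ellf f lam1 (u i)) hq0le ha0 hamem hc hψ hz hq k).2 w hw using 1
  rw [EReal.coe_add, add_right_comm]
  congr 3
  rw [movingAvgWeight, zero_add]
  ring

/-- the model `q_k` of AGM-EF-1 is dominated by a convex combination of the linearizations. -/
theorem stmt17 {E : Type*} [NormedAddCommGroup E] [NormedSpace ℝ E] [FiniteDimensional ℝ E]
    (σ lam1 lam2 L : ℝ) (hσ : 0 < σ) (hlam1 : 0 ≤ lam1) (hlam2 : 0 ≤ lam2)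
    (hL : σ * lam1 < L)
    (d : E → ℝ) (hddiff : Differentiable ℝ d) (hdconv : ConvexOn ℝ Set.univ d)
    (hdsc : StrongConvexOnNorm σ d)
    (Ψ : E → EReal) (hΨbot : ∀ x, Ψ x ≠ ⊥) (hΨprop : ∃ x, Ψ x ≠ ⊤)
    (hΨlsc : LowerSemicontinuous Ψ) (hΨconv : ConvexE Ψ) (hΨsc : ScWrtE d lam2 Ψ)
    (f : E → ℝ) (hfconv : ConvexOn ℝ Set.univ f) (hfdiff : Differentiable ℝ f)
    (hfsc : ScWrtR d lam1 f)
    (hfL : ∀ x y : E, ‖fderiv ℝ f x - fderiv ℝ f y‖ ≤ L * ‖x - y‖)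
    -- Algorithm AGM-EF-1
    (x z u : ℕ → E) (a c : ℕ → ℝ) (ψ q : ℕ → E → EReal)
    (hu0 : Ψ (u 0) ≠ ⊤) (hc0 : c 0 = L / σ + lam2)
    (hq0 : ∀ w, q 0 w =
      ((L / σ * breg d w (u 0) + f (u 0) + fderiv ℝ f (u 0) (w - u 0) : ℝ) : EReal) + Ψ w)
    (hx0 : x 0 = z 0) (hz0min : ∀ w, q 0 (z 0) ≤ q 0 w)
    (hamem : ∀ k, a (k + 1) ∈ Set.Ioo (0 : ℝ) 1)
    (haroot : ∀ k, σ * (1 - a (k + 1)) * (c k + lam2 * a (k + 1)) + σ * lam1 * a (k + 1)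
        = L * a (k + 1) ^ 2)
    (hc : ∀ k, c (k + 1) = (1 - a (k + 1)) * c k + (lam1 + lam2) * a (k + 1))
    (hu : ∀ k,
      u (k + 1) =
        ((((1 - a (k + 1)) * c k + lam1 * a (k + 1) + lam2 * a (k + 1) * (1 - a (k + 1)))
            - lam1 * a (k + 1) * a (k + 1))⁻¹) •
          (((((1 - a (k + 1)) * c k + lam1 * a (k + 1) + lam2 * a (k + 1) * (1 - a (k + 1)))
                - ((1 - a (k + 1)) * c k + lam1 * a (k + 1)) * a (k + 1)) • x k)
            + (((1 - a (k + 1)) * c k * a (k + 1)) • z k)))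
    (hψ : ∀ k w, ψ (k + 1) w =
      ((1 - a (k + 1) : ℝ) : EReal) * q k w
        + ((a (k + 1) : ℝ) : EReal) * (((ellf d f lam1 w (u (k + 1)) : ℝ) : EReal) + Ψ w))
    (hz : ∀ k w, ψ (k + 1) (z (k + 1)) ≤ ψ (k + 1) w)
    (hx : ∀ k, x (k + 1) = (1 - a (k + 1)) • x k + a (k + 1) • z (k + 1))
    (hq : ∀ k w, q (k + 1) w =
      ((c (k + 1) * breg d w (z (k + 1)) : ℝ) : EReal) + ψ (k + 1) (z (k + 1)))
    (ha0 : a 0 = 1) :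
    ∀ k : ℕ, 1 ≤ k →
      (∑ i ∈ Finset.range (k + 1), a i * ∏ j ∈ Finset.Icc (i + 1) k, (1 - a j)) = 1 ∧
      ∀ w : E, Ψ w ≠ ⊤ →
        q k w ≤
          ((L / σ * (a 0 * ∏ j ∈ Finset.Icc 1 k, (1 - a j)) * breg d w (u 0) : ℝ) : EReal)
            + Ψ w
            + ((∑ i ∈ Finset.range (k + 1),
                (a i * ∏ j ∈ Finset.Icc (i + 1) k, (1 - a j)) * ellf d f lam1 w (u i) : ℝ) :
              EReal) :=
  stmt17_general σ lam1 lam2 L hσ hlam1 d hddiff hdsc Ψ hΨbot hΨprop hΨconv hΨsc f x z u a c ψ q hc0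
    hq0 hamem hc hψ hz hq ha0
end
end
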